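/- arXiv:1601.01101 — 3 statements merged into one kernel-verified Lean document; each statement's English description precedes it below -/
import Mathlib

section
/- A ring R is right hereditary if and only if every quotient module of an injective right R-module is a C3-module. -/
universe u v

open CategoryTheory

section ModuleDefs

variable (R : Type u) [Ring R]

/-- `N` is an essential submodule of `D` (inside the ambient module `M`). -/
def IsEssentialIn {M : Type v} [AddCommGroup M] [Module R M] (N D : Submodule R M) : Prop :=
  N ≤ D ∧ ∀ K : Submodule R M, K ≤ D → K ≠ ⊥ → N ⊓ K ≠ ⊥

/-- `N` is a direct summand of the ambient module. -/
def IsSummand {M : Type v} [AddCommGroup M] [Module R M] (N : Submodule R M) : Prop :=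
  ∃ N' : Submodule R M, IsCompl N N'

/-- C1 (extending) module: every submodule is essential in a direct summand. -/
def IsC1Module (M : Type v) [AddCommGroup M] [Module R M] : Prop :=
  ∀ N : Submodule R M, ∃ D : Submodule R M, IsSummand R D ∧ IsEssentialIn R N D

/-- C2 module: every submodule isomorphic to a direct summand is a direct summand. -/
def IsC2Module (M : Type v) [AddCommGroup M] [Module R M] : Prop :=
  ∀ A B : Submodule R M, IsSummand R B → Nonempty (A ≃ₗ[R] B) → IsSummand R A

/-- C3 module: the sum of two direct summands intersecting trivially is a direct summand. -/
def IsC3Module (M : Type v) [AddCommGroup M] [Module R M] : Prop :=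
  ∀ A B : Submodule R M, IsSummand R A → IsSummand R B → A ⊓ B = ⊥ → IsSummand R (A ⊔ B)

/-- Quasi-continuous module: C1 and C3. -/
def IsQuasiContinuousModule (M : Type v) [AddCommGroup M] [Module R M] : Prop :=
  IsC1Module R M ∧ IsC3Module R M

/-- Continuous module: C1 and C2. -/
def IsContinuousModule (M : Type v) [AddCommGroup M] [Module R M] : Prop :=
  IsC1Module R M ∧ IsC2Module R M

/-- Quasi-injective module: every homomorphism from a submodule into the module
extends to an endomorphism. -/
def IsQuasiInjectiveModule (M : Type v) [AddCommGroup M] [Module R M] : Prop :=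
  ∀ (N : Submodule R M) (f : N →ₗ[R] M), ∃ g : M →ₗ[R] M, ∀ x : N, g x = f x

end ModuleDefs

section ApproxDefs

variable (R : Type u) [Ring R]

/-- `g : M ⟶ E` is a `C`-preenvelope of `M`. -/
def IsPreenvelope (C : ModuleCat.{u} R → Prop) {M E : ModuleCat.{u} R} (g : M ⟶ E) : Prop :=
  C E ∧ ∀ E' : ModuleCat.{u} R, C E' → ∀ g' : M ⟶ E', ∃ α : E ⟶ E', g ≫ α = g'

/-- A preenveloping class. -/
def Preenveloping (C : ModuleCat.{u} R → Prop) : Prop :=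
  ∀ M : ModuleCat.{u} R, ∃ (E : ModuleCat.{u} R) (g : M ⟶ E), IsPreenvelope R C g

/-- `g : M ⟶ E` is a `C`-envelope of `M`. -/
def IsEnvelope (C : ModuleCat.{u} R → Prop) {M E : ModuleCat.{u} R} (g : M ⟶ E) : Prop :=
  IsPreenvelope R C g ∧ ∀ α : E ⟶ E, g ≫ α = g → IsIso α

/-- An enveloping class. -/
def Enveloping (C : ModuleCat.{u} R → Prop) : Prop :=
  ∀ M : ModuleCat.{u} R, ∃ (E : ModuleCat.{u} R) (g : M ⟶ E), IsEnvelope R C g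

/-- `g : X ⟶ M` is a `C`-precover of `M`. -/
def IsPrecover (C : ModuleCat.{u} R → Prop) {X M : ModuleCat.{u} R} (g : X ⟶ M) : Prop :=
  C X ∧ ∀ X' : ModuleCat.{u} R, C X' → ∀ g' : X' ⟶ M, ∃ α : X' ⟶ X, α ≫ g = g'

/-- A precovering class. -/
def Precovering (C : ModuleCat.{u} R → Prop) : Prop :=
  ∀ M : ModuleCat.{u} R, ∃ (X : ModuleCat.{u} R) (g : X ⟶ M), IsPrecover R C g

/-- `C` is closed under finite direct sums. -/
def ClosedUnderFiniteDirectSums (C : ModuleCat.{u} R → Prop) : Prop :=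
  ∀ (n : ℕ) (M : Fin n → ModuleCat.{u} R), (∀ i, C (M i)) →
    C (ModuleCat.of R (∀ i, M i))

/-- `C` is closed under isomorphisms. -/
def ClosedUnderIso (C : ModuleCat.{u} R → Prop) : Prop :=
  ∀ M N : ModuleCat.{u} R, (M ≅ N) → C M → C N

/-- `C` is closed under direct summands. -/
def ClosedUnderSummands (C : ModuleCat.{u} R → Prop) : Prop :=
  ∀ (M : ModuleCat.{u} R) (N : Submodule R M), IsSummand R N → C M → C (ModuleCat.of R N)

end ApproxDefs
section ExtraDefs

variable (R : Type u) [Ring R]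

/-- A uniform module: nonzero, and every nonzero submodule is essential. -/
def IsUniformModule (M : Type v) [AddCommGroup M] [Module R M] : Prop :=
  Nontrivial M ∧ ∀ N : Submodule R M, N ≠ ⊥ → IsEssentialIn R N (⊤ : Submodule R M)

/-- A module of composition length exactly `2`. -/
def HasCompositionLength2 (M : Type v) [AddCommGroup M] [Module R M] : Prop :=
  ∃ N : Submodule R M, IsSimpleModule R N ∧ IsSimpleModule R (M ⧸ N)

/-- A module of composition length at most `2`. -/
def CompositionLengthLE2 (M : Type v) [AddCommGroup M] [Module R M] : Prop :=
  ∃ N : Submodule R M, (IsSimpleModule R N ∨ N = ⊥) ∧ (IsSimpleModule R (M ⧸ N) ∨ N = ⊤)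

end ExtraDefs

/-! A ring is right hereditary iff quotients of injective modules are injective: one direction is
Baer's criterion together with lifting maps from projective ideals; for the other, a map from an
ideal into `A ⧸ ker f` is lifted by embedding `A` in an injective `E` and extending into the
injective module `E ⧸ ι(ker f)`.

Injective modules are C3, since the sum of two independent injective summands is injective,
hence a summand. Conversely, embed `Q = E ⧸ K` into an injective `H` via `σ`. Then `Q × H` is a
quotient of the injective `E × H`, and `Q × 0` and the graph of `σ` are independent summands
(both complements of `0 × H`). Their sum `Q × σ(Q)` is a summand only if `σ(Q) ≅ Q` is a summand
of `H`, so `Q` is injective. -/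

section Summands

variable {R : Type u} [Ring R] {M N : Type v} [AddCommGroup M] [Module R M]
  [AddCommGroup N] [Module R N]

theorem isSummand_of_retraction {S : Submodule R M} (r : M →ₗ[R] S) (hr : ∀ x : S, r x = x) :
    IsSummand R S :=
  ⟨_, LinearMap.isCompl_of_proj hr⟩

theorem IsSummand.map_orderIso (F : Submodule R M ≃o Submodule R N) {A : Submodule R M}
    (h : IsSummand R A) : IsSummand R (F A) :=
  let ⟨A', hc⟩ := h; ⟨F A', F.isCompl hc⟩

theorem IsSummand.of_prod_right {S : Submodule R M} {T : Submodule R N}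
    (h : IsSummand R (S.prod T)) : IsSummand R T := by
  obtain ⟨C, hC⟩ := h
  let p := Submodule.projectionOnto _ C hC
  refine isSummand_of_retraction
    (LinearMap.codRestrict T
      (LinearMap.snd R M N ∘ₗ Submodule.subtype _ ∘ₗ p ∘ₗ LinearMap.inr R M N)
      fun n => (p (0, n)).2.2) fun t => Subtype.ext ?_
  have hmem : ((0 : M), (t : N)) ∈ S.prod T := ⟨S.zero_mem, t.2⟩
  change (p (0, t) : M × N).2 = t
  rw [show p (0, t) = ⟨_, hmem⟩ from Submodule.projectionOnto_apply_left hC ⟨_, hmem⟩]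

theorem IsC3Module.of_linearEquiv (e : M ≃ₗ[R] N) (h : IsC3Module R M) : IsC3Module R N := by
  intro A B hA hB hAB
  let F : Submodule R M ≃o Submodule R N := Submodule.orderIsoMapComap e
  have hAB' : F.symm A ⊓ F.symm B = ⊥ := by rw [← F.symm.map_inf, hAB, F.symm.map_bot]
  simpa [F.map_sup] using
    (h _ _ (hA.map_orderIso F.symm) (hB.map_orderIso F.symm) hAB').map_orderIso F

end Summands

section Injective

variable {R : Type u} [Ring R] {M N : Type v} [AddCommGroup M] [Module R M]
  [AddCommGroup N] [Module R N]

theorem Module.Injective.of_linearEquiv (e : M ≃ₗ[R] N) [Module.Injective R M] :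
    Module.Injective R N where
  out X Y _ _ _ _ f hf g := by
    obtain ⟨h, hh⟩ := Module.Injective.out f hf (e.symm.toLinearMap ∘ₗ g)
    exact ⟨e.toLinearMap ∘ₗ h, fun x => by simp [hh x]⟩

instance Module.Injective.prod [Module.Injective R M] [Module.Injective R N] :
    Module.Injective R (M × N) where
  out X Y _ _ _ _ f hf g := by
    obtain ⟨hM, hM'⟩ := Module.Injective.out f hf (LinearMap.fst R M N ∘ₗ g)
    obtain ⟨hN, hN'⟩ := Module.Injective.out f hf (LinearMap.snd R M N ∘ₗ g)
    exact ⟨hM.prod hN, fun x => Prod.ext (hM' x) (hN' x)⟩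

theorem Module.Injective.of_isSummand [Module.Injective R M] {S : Submodule R M}
    (h : IsSummand R S) : Module.Injective R S where
  out X Y _ _ _ _ f hf g := by
    obtain ⟨S', hc⟩ := h
    obtain ⟨h, hh⟩ := Module.Injective.out f hf (S.subtype ∘ₗ g)
    refine ⟨Submodule.projectionOnto S S' hc ∘ₗ h, fun x => ?_⟩
    simp [hh x]

theorem isSummand_of_injective {S : Submodule R M} [Module.Injective R S] : IsSummand R S :=
  let ⟨r, hr⟩ := Module.Injective.out S.subtype Subtype.val_injective LinearMap.id
  isSummand_of_retraction r hr

noncomputable def Submodule.prodEquivSupOfDisjoint {A B : Submodule R M} (h : Disjoint A B) :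
    (A × B) ≃ₗ[R] ↥(A ⊔ B) :=
  have hinj : Function.Injective (A.subtype.coprod B.subtype) := by
    rw [← LinearMap.ker_eq_bot, LinearMap.ker_coprod_of_disjoint_range _ _ (by simpa using h)]
    simp
  (LinearEquiv.ofInjective _ hinj).trans
    (LinearEquiv.ofEq _ _ (by simp [LinearMap.range_coprod]))

theorem isC3Module_of_injective [Module.Injective R M] : IsC3Module R M := by
  intro A B hA hB hAB
  have := Module.Injective.of_isSummand hA
  have := Module.Injective.of_isSummand hB
  have := Module.Injective.of_linearEquiv (Submodule.prodEquivSupOfDisjoint (disjoint_iff.2 hAB))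
  exact isSummand_of_injective

end Injective

section C3

variable {R : Type u} [Ring R] {Q H : Type v} [AddCommGroup Q] [Module R Q]
  [AddCommGroup H] [Module R H]

theorem LinearMap.isCompl_graph_bot_prod_top (φ : Q →ₗ[R] H) :
    IsCompl φ.graph ((⊥ : Submodule R Q).prod ⊤) := by
  refine ⟨Submodule.disjoint_def.mpr ?_, codisjoint_iff.mpr (eq_top_iff.mpr ?_)⟩
  · rintro ⟨q, h⟩ hgraph ⟨rfl : q = 0, -⟩
    simpa [LinearMap.mem_graph_iff] using hgraph
  · rintro ⟨q, h⟩ -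
    have hsplit : (q, h) = (q, φ q) + (0, h - φ q) := by simp
    rw [hsplit]
    exact Submodule.add_mem_sup ((φ.mem_graph_iff _).mpr rfl) ⟨Submodule.zero_mem _, trivial⟩

theorem LinearMap.graph_zero_sup_graph (σ : Q →ₗ[R] H) :
    (0 : Q →ₗ[R] H).graph ⊔ σ.graph = (⊤ : Submodule R Q).prod (LinearMap.range σ) := by
  refine le_antisymm (sup_le ?_ ?_) ?_
  · rintro ⟨q, h⟩ (rfl : h = 0)
    exact ⟨trivial, Submodule.zero_mem _⟩
  · rintro ⟨q, h⟩ (rfl : h = σ q)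
    exact ⟨trivial, LinearMap.mem_range_self σ q⟩
  · rintro ⟨q, h⟩ ⟨-, y, rfl⟩
    have hsplit : (q, σ y) = (q - y, 0) + (y, σ y) := by simp
    rw [hsplit]
    exact Submodule.add_mem_sup ((LinearMap.mem_graph_iff _ _).mpr rfl)
      ((σ.mem_graph_iff _).mpr rfl)

theorem IsC3Module.isSummand_range (h : IsC3Module R (Q × H)) {σ : Q →ₗ[R] H}
    (hσ : Function.Injective σ) : IsSummand R (LinearMap.range σ) := by
  have hdisj : (0 : Q →ₗ[R] H).graph ⊓ σ.graph = ⊥ := by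
    refine eq_bot_iff.mpr fun ⟨q, h⟩ ⟨(h0 : h = 0), (hσq : h = σ q)⟩ => ?_
    have hq : q = 0 := hσ (by rw [← hσq, h0, map_zero])
    simp [hq, h0]
  have hsum := h _ _ ⟨_, LinearMap.isCompl_graph_bot_prod_top 0⟩
    ⟨_, σ.isCompl_graph_bot_prod_top⟩ hdisj
  rw [LinearMap.graph_zero_sup_graph] at hsum
  exact hsum.of_prod_right

end C3

section Hereditary

variable {R : Type u} [Ring R]

theorem exists_injective_embedding (A : Type u) [AddCommGroup A] [Module R A] :
    ∃ (E : ModuleCat.{u} R) (ι : A →ₗ[R] E), Module.Injective R E ∧ Function.Injective ι := by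
  obtain ⟨J, _, f, _⟩ := EnoughInjectives.presentation (ModuleCat.of R A)
  exact ⟨J, f.hom, Module.injective_module_of_injective_object R J,
    (ModuleCat.mono_iff_injective f).mp inferInstance⟩

theorem Module.Injective.quotient_of_forall_projective_ideal
    (hproj : ∀ I : Ideal R, Module.Projective R I) {M : Type u} [AddCommGroup M] [Module R M]
    [Module.Injective R M] (N : Submodule R M) : Module.Injective R (M ⧸ N) := by
  refine Module.Baer.injective fun I g => ?_
  obtain ⟨g', hg'⟩ := Module.projective_lifting_property N.mkQ g N.mkQ_surjective
  obtain ⟨h, hh⟩ := Module.Baer.of_injective ‹_› I g'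
  exact ⟨N.mkQ ∘ₗ h, fun x hx => by simp [hh x hx, ← hg']⟩

theorem exists_injective_quotient_map_of_surjective {A B E : Type u} [AddCommGroup A]
    [Module R A] [AddCommGroup B] [Module R B] [AddCommGroup E] [Module R E] {f : A →ₗ[R] B}
    (hf : Function.Surjective f) {ι : A →ₗ[R] E} (hι : Function.Injective ι) :
    ∃ j : B →ₗ[R] E ⧸ (LinearMap.ker f).map ι,
      Function.Injective j ∧ ∀ a, j (f a) = ((LinearMap.ker f).map ι).mkQ (ι a) := by
  set K := (LinearMap.ker f).map ι
  have hker : LinearMap.ker f = LinearMap.ker (K.mkQ ∘ₗ ι) := by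
    rw [LinearMap.ker_comp, Submodule.ker_mkQ, Submodule.comap_map_eq_of_injective hι]
  refine ⟨(LinearMap.ker f).liftQ _ hker.le ∘ₗ (f.quotKerEquivOfSurjective hf).symm.toLinearMap,
    ?_, fun a => by simp⟩
  rw [LinearMap.coe_comp]
  exact (LinearMap.ker_eq_bot.mp (Submodule.ker_liftQ_eq_bot' _ _ hker)).comp
    (LinearEquiv.injective _)

theorem exists_lift_of_injective_quotient {A B E : Type u} [AddCommGroup A] [Module R A]
    [AddCommGroup B] [Module R B] [AddCommGroup E] [Module R E] {f : A →ₗ[R] B}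
    (hf : Function.Surjective f) {ι : A →ₗ[R] E} (hι : Function.Injective ι)
    [Module.Injective R (E ⧸ (LinearMap.ker f).map ι)] (I : Ideal R) (g : I →ₗ[R] B) :
    ∃ h : I →ₗ[R] A, f ∘ₗ h = g := by
  set K := (LinearMap.ker f).map ι
  obtain ⟨j, hj_inj, hj⟩ := exists_injective_quotient_map_of_surjective hf hι
  obtain ⟨Φ, hΦ⟩ := Module.Baer.of_injective ‹_› I (j ∘ₗ g)
  obtain ⟨e, he⟩ := K.mkQ_surjective (Φ 1)
  have hmul : ∀ x : I, K.mkQ ((x : R) • e) = j (g x) := fun x => by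
    rw [map_smul, he, ← map_smul, smul_eq_mul, mul_one, hΦ x x.2]
    rfl
  have hrange : ∀ x : I, (x : R) • e ∈ LinearMap.range ι := by
    intro x
    obtain ⟨a, ha⟩ := hf (g x)
    have hK : (x : R) • e - ι a ∈ K := by
      rw [← Submodule.Quotient.mk_eq_zero, Submodule.Quotient.mk_sub, sub_eq_zero]
      exact (hmul x).trans (by rw [← ha, hj]; rfl)
    simpa using add_mem (LinearMap.map_le_range hK) (LinearMap.mem_range_self ι a)
  let h : I →ₗ[R] A := (LinearEquiv.ofInjective ι hι).symm.toLinearMap ∘ₗ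
    LinearMap.codRestrict _ (LinearMap.toSpanSingleton R E e ∘ₗ I.subtype) hrange
  refine ⟨h, LinearMap.ext fun x => hj_inj ?_⟩
  have hιh : ι (h x) = (x : R) • e :=
    LinearEquiv.ofInjective_symm_apply (f := ι) (h := hι) ⟨_, hrange x⟩
  change j (f (h x)) = j (g x)
  rw [hj, hιh, hmul]

theorem projective_ideal_of_injective_quotients
    (hq : ∀ (E : Type u) [AddCommGroup E] [Module R E] (K : Submodule R E),
      Module.Injective R E → Module.Injective R (E ⧸ K))
    (I : Ideal R) : Module.Projective R I :=
  Module.Projective.of_lifting_property fun {A _} _ _ _ _ f g hf => by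
    obtain ⟨E, ι, hE, hι⟩ := exists_injective_embedding (R := R) A
    have := hq E ((LinearMap.ker f).map ι) hE
    exact exists_lift_of_injective_quotient hf hι I g

theorem forall_projective_ideal_iff_injective_quotients :
    (∀ I : Submodule R R, Module.Projective R I) ↔
      ∀ (M : Type u) [AddCommGroup M] [Module R M] (N : Submodule R M),
        Module.Injective R M → Module.Injective R (M ⧸ N) :=
  ⟨fun h _ _ _ N _ => Module.Injective.quotient_of_forall_projective_ideal h N,
    projective_ideal_of_injective_quotients⟩

theorem injective_quotient_of_isC3Module_quotients
    (hc3 : ∀ (M : Type u) [AddCommGroup M] [Module R M] (N : Submodule R M),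
      Module.Injective R M → IsC3Module R (M ⧸ N))
    {E : Type u} [AddCommGroup E] [Module R E] [Module.Injective R E] (K : Submodule R E) :
    Module.Injective R (E ⧸ K) := by
  obtain ⟨H, σ, hH, hσ⟩ := exists_injective_embedding (R := R) (E ⧸ K)
  let φ : E × H →ₗ[R] (E ⧸ K) × H := K.mkQ.prodMap LinearMap.id
  have hφ : Function.Surjective φ :=
    Prod.map_surjective.mpr ⟨K.mkQ_surjective, Function.surjective_id⟩
  have hC3 : IsC3Module R ((E ⧸ K) × H) :=
    (hc3 _ (LinearMap.ker φ) inferInstance).of_linearEquiv (φ.quotKerEquivOfSurjective hφ)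
  have := Module.Injective.of_isSummand (hC3.isSummand_range hσ)
  exact Module.Injective.of_linearEquiv (LinearEquiv.ofInjective σ hσ).symm

end Hereditary

theorem stmt_8 (R : Type u) [Ring R] :
    (∀ I : Submodule R R, Module.Projective R I) ↔
      ∀ (M : Type u) [AddCommGroup M] [Module R M] (N : Submodule R M),
        Module.Injective R M → IsC3Module R (M ⧸ N) := by
  rw [forall_projective_ideal_iff_injective_quotients]
  exact ⟨fun h M _ _ N hM => have := h M N hM; isC3Module_of_injective,
    fun h E _ _ K _ => injective_quotient_of_isC3Module_quotients h K⟩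
end

section
/- Let R be a ring such that the class of all C1 right R-modules is closed under finite direct sums. Let N be a C1-module such that Hom_R(N, E(R)) = 0, where E(R) is the injective hull of the right R-module R. Then N is injective. -/
universe u v

open CategoryTheory

/-! Injective modules are C1: if `D` is a maximal essential extension of a submodule and `C` is
maximal with `C ⊓ D = ⊥`, extending the projection `D ⊕ C → D` gives an endomorphism `g` whose
range is an essential extension of `D`, hence equal to `D`; so `g` is idempotent and `D` is a
summand. Therefore `N × E` is C1. For Baer's criterion, take `f : I → N`; the graph of `(f, i)` is
essential in a summand `D ⊕ D' = N × E`. As `i` is injective, `D` meets `N × 0` trivially, and as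
`Hom(N, E) = 0` the projection onto `D` vanishes on `N × 0`, i.e. `N × 0 ≤ D'`. The first
coordinate of the projection onto `D'` is then a retraction `h` of `N × E` onto `N` killing the
graph, and `-(h ∘ inr ∘ i)` extends `f`. -/

open Submodule LinearMap

section Essential

variable {R : Type u} [Ring R] {M : Type v} [AddCommGroup M] [Module R M]

theorem IsEssentialIn.refl (A : Submodule R M) : IsEssentialIn R A A :=
  ⟨le_rfl, fun K hK hK0 => by rwa [inf_eq_right.mpr hK]⟩

theorem IsEssentialIn.trans {A B C : Submodule R M} (hAB : IsEssentialIn R A B)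
    (hBC : IsEssentialIn R B C) : IsEssentialIn R A C :=
  ⟨hAB.1.trans hBC.1, fun K hK hK0 =>
    ne_bot_of_le_ne_bot (hAB.2 (B ⊓ K) inf_le_left (hBC.2 K hK hK0))
      (inf_le_inf_left A inf_le_right)⟩

theorem IsEssentialIn.disjoint {A D W : Submodule R M} (h : IsEssentialIn R A D)
    (hAW : Disjoint A W) : Disjoint D W :=
  disjoint_iff.mpr <| by_contra fun hDW =>
    h.2 (D ⊓ W) inf_le_left hDW (disjoint_iff.mp (hAW.mono_right inf_le_right))

theorem IsEssentialIn.map_orderIso {M' : Type w} [AddCommGroup M'] [Module R M']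
    (φ : Submodule R M ≃o Submodule R M') {A B : Submodule R M} (h : IsEssentialIn R A B) :
    IsEssentialIn R (φ A) (φ B) := by
  refine ⟨φ.monotone h.1, fun K hK hK0 => ?_⟩
  obtain ⟨K, rfl⟩ := φ.surjective K
  rw [← φ.map_inf, Ne, ← map_bot φ, φ.injective.eq_iff]
  exact h.2 K (φ.le_iff_le.mp hK) (by rwa [Ne, ← map_bot φ, φ.injective.eq_iff] at hK0)

theorem exists_maximal_isEssentialIn (A : Submodule R M) :
    ∃ D, Maximal (IsEssentialIn R A) D := by
  suffices ∀ c ⊆ {D | IsEssentialIn R A D}, IsChain (· ≤ ·) c →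
      ∀ D ∈ c, ∃ ub ∈ {D | IsEssentialIn R A D}, ∀ X ∈ c, X ≤ ub by
    obtain ⟨D, -, hD⟩ := zorn_le_nonempty₀ _ this A (.refl A)
    exact ⟨D, hD⟩
  intro c hc hchain D hD
  refine ⟨sSup c, ⟨(hc hD).1.trans (le_sSup hD), fun K hK hK0 => ?_⟩, fun _ => le_sSup⟩
  obtain ⟨x, hxK, hx0⟩ := (Submodule.ne_bot_iff K).mp hK0
  obtain ⟨X, hXc, hxX⟩ := (mem_sSup_of_directed ⟨D, hD⟩ hchain.directedOn).mp (hK hxK)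
  have hx : span R {x} ≠ ⊥ := by simpa [span_singleton_eq_bot] using hx0
  exact ne_bot_of_le_ne_bot ((hc hXc).2 _ (span_singleton_le_iff_mem x X |>.mpr hxX) hx)
    (inf_le_inf_left A (span_singleton_le_iff_mem x K |>.mpr hxK))

end Essential

theorem exists_maximal_disjoint {α : Type*} [CompleteLattice α] [IsCompactlyGenerated α]
    (a : α) : ∃ b, Maximal (Disjoint · a) b := by
  obtain ⟨b, -, hb⟩ := zorn_le_nonempty₀ {b | Disjoint b a}
    (fun c hc hchain _ _ => ⟨sSup c, hchain.directedOn.disjoint_sSup_left.mpr fun _ hb => hc hb,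
      fun _ => le_sSup⟩) ⊥ disjoint_bot_left
  exact ⟨b, hb⟩

section Injective

variable {R : Type u} [Ring R] {M : Type v} [AddCommGroup M] [Module R M]

theorem exists_endomorphism_fixing_of_disjoint [Module.Injective R M] {D C : Submodule R M}
    (hDC : Disjoint D C) : ∃ g : M →ₗ[R] M, (∀ x ∈ D, g x = x) ∧ C ≤ ker g := by
  have hinj : Function.Injective (D.subtype.coprod C.subtype) := by
    rw [← ker_eq_bot, ker_coprod_of_disjoint_range _ _ (by simpa using hDC)]
    simp
  obtain ⟨g, hg⟩ := Module.Injective.out _ hinj (D.subtype ∘ₗ fst R D C)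
  exact ⟨g, fun x hx => by simpa using hg (⟨x, hx⟩, 0), fun x hx => by simpa using hg (0, ⟨x, hx⟩)⟩

theorem isEssentialIn_range_of_maximal_disjoint {D C : Submodule R M}
    (hC : Maximal (Disjoint · D) C) {g : M →ₗ[R] M} (hgD : ∀ x ∈ D, g x = x)
    (hgC : C ≤ ker g) : IsEssentialIn R D (range g) := by
  refine ⟨fun x hx => ⟨x, hgD x hx⟩, fun K hK hK0 hDK => ?_⟩
  obtain ⟨x, hxK, hx0⟩ := (Submodule.ne_bot_iff K).mp hK0
  obtain ⟨e, rfl⟩ := hK hxK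
  -- `g` fixes `D` and maps `C ⊔ span {e}` into `K`, which meets `D` trivially
  have hdisj : Disjoint (C ⊔ span R {e}) D := by
    rw [Submodule.disjoint_def]
    intro d hd hdD
    obtain ⟨c, hc, y, hy, rfl⟩ := mem_sup.mp hd
    obtain ⟨r, rfl⟩ := mem_span_singleton.mp hy
    have hgd : g (c + r • e) ∈ D ⊓ K := by
      refine ⟨by rwa [hgD _ hdD], ?_⟩
      rw [map_add, mem_ker.mp (hgC hc), zero_add, map_smul]
      exact K.smul_mem r hxK
    rwa [hDK, mem_bot, hgD _ hdD] at hgd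
  have he : e ∈ C := by
    rw [hC.eq_of_le hdisj le_sup_left]
    exact mem_sup_right (mem_span_singleton_self e)
  exact hx0 (hgC he)

theorem IsC1Module.of_injective [Module.Injective R M] : IsC1Module R M := by
  intro A
  obtain ⟨D, hD⟩ := exists_maximal_isEssentialIn A
  obtain ⟨C, hC⟩ := exists_maximal_disjoint D
  obtain ⟨g, hgD, hgC⟩ := exists_endomorphism_fixing_of_disjoint hC.prop.symm
  have hDg := isEssentialIn_range_of_maximal_disjoint hC hgD hgC
  have hrange : range g ≤ D := (hD.eq_of_le (hD.prop.trans hDg) hDg.1).ge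
  refine ⟨D, ⟨ker g, ?_⟩, hD.prop⟩
  simpa using isCompl_of_proj (f := g.codRestrict D fun x => hrange (mem_range_self g x))
    fun x => Subtype.ext (hgD x x.2)

theorem IsC1Module.of_linearEquiv {M' : Type w} [AddCommGroup M'] [Module R M']
    (e : M ≃ₗ[R] M') (h : IsC1Module R M) : IsC1Module R M' := by
  intro A
  let φ := orderIsoMapComap e
  obtain ⟨D, ⟨D', hDD'⟩, hAD⟩ := h (φ.symm A)
  refine ⟨φ D, ⟨φ D', φ.isCompl hDD'⟩, ?_⟩
  simpa only [φ.apply_symm_apply] using hAD.map_orderIso φ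

end Injective

theorem ClosedUnderFiniteDirectSums.isC1Module_prod {R : Type u} [Ring R]
    (hsum : ClosedUnderFiniteDirectSums R (fun M : ModuleCat.{u} R => IsC1Module R M))
    {M M' : Type u} [AddCommGroup M] [Module R M] [AddCommGroup M'] [Module R M']
    (hM : IsC1Module R M) (hM' : IsC1Module R M') : IsC1Module R (M × M') := by
  let F : Fin 2 → ModuleCat.{u} R := ![.of R M, .of R M']
  have hF : ∀ j, IsC1Module R (F j) := Fin.forall_fin_two.mpr ⟨hM, hM'⟩
  exact (hsum 2 F hF).of_linearEquiv (LinearEquiv.piFinTwo R fun j => F j)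

section Baer

variable {R : Type u} [Ring R] {N E : Type v} [AddCommGroup N] [Module R N] [AddCommGroup E]
  [Module R E]

theorem range_inl_le_of_isCompl (hhom : ∀ f : N →ₗ[R] E, f = 0) {D D' : Submodule R (N × E)}
    (hDD' : IsCompl D D') (hD : Disjoint D (range (inl R N E))) : range (inl R N E) ≤ D' := by
  rintro _ ⟨n, rfl⟩
  let p := D.projection D' hDD'
  have hp : p (inl R N E n) ∈ range (inl R N E) := by
    rw [← ker_snd, mem_ker]
    exact congr($(hhom (snd R N E ∘ₗ p ∘ₗ inl R N E)) n)
  rw [← projection_apply_eq_zero_iff hDD']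
  exact (Submodule.disjoint_def.mp hD) _ (projection_apply_mem hDD' _) hp

theorem Module.injective_of_isC1Module_prod (hNE : IsC1Module R (N × E)) {i : R →ₗ[R] E}
    (hi : Function.Injective i) (hhom : ∀ f : N →ₗ[R] E, f = 0) : Module.Injective R N := by
  refine Module.Baer.injective fun I f => ?_
  obtain ⟨D, ⟨D', hDD'⟩, hKD⟩ := hNE (range (f.prod (i ∘ₗ I.subtype)))
  have hK : Disjoint (range (f.prod (i ∘ₗ I.subtype))) (range (inl R N E)) := by
    rw [← ker_snd, Submodule.disjoint_def]
    rintro _ ⟨x, rfl⟩ hx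
    obtain rfl : x = 0 := Subtype.ext (hi (by simpa using hx))
    exact map_zero _
  have hN := range_inl_le_of_isCompl hhom hDD' (hKD.disjoint hK)
  let h := fst R N E ∘ₗ D'.projection D hDD'.symm
  have hinl : ∀ n, h (inl R N E n) = n := fun n =>
    congrArg Prod.fst (projection_apply_of_mem_left hDD'.symm (hN ⟨n, rfl⟩))
  have hgraph : ∀ x : I, h (f x, i x) = 0 := fun x =>
    congrArg Prod.fst (projection_apply_of_mem_right hDD'.symm (hKD.1 ⟨x, rfl⟩))
  refine ⟨-(h ∘ₗ inr R N E ∘ₗ i), fun x hx => ?_⟩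
  have hsplit : f ⟨x, hx⟩ + h (inr R N E (i x)) = 0 := calc
    _ = h (inl R N E (f ⟨x, hx⟩) + inr R N E (i x)) := by rw [map_add, hinl]
    _ = h (f ⟨x, hx⟩, i x) := by simp
    _ = 0 := hgraph ⟨x, hx⟩
  exact (eq_neg_of_add_eq_zero_left hsplit).symm

end Baer

theorem stmt_9_general (R : Type u) [Ring R]
    (hsum : ClosedUnderFiniteDirectSums R (fun M : ModuleCat.{u} R => IsC1Module R M))
    (N : Type u) [AddCommGroup N] [Module R N] (hN : IsC1Module R N)
    (E : Type u) [AddCommGroup E] [Module R E] (hEinj : Module.Injective R E)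
    (i : R →ₗ[R] E) (hi : Function.Injective i)
    (hhom : ∀ f : N →ₗ[R] E, f = 0) :
    Module.Injective R N := by
  have := hEinj
  exact Module.injective_of_isC1Module_prod (hsum.isC1Module_prod hN .of_injective) hi hhom

theorem stmt_9 (R : Type u) [Ring R]
    (hsum : ClosedUnderFiniteDirectSums R (fun M : ModuleCat.{u} R => IsC1Module R M))
    (N : Type u) [AddCommGroup N] [Module R N] (hN : IsC1Module R N)
    (E : Type u) [AddCommGroup E] [Module R E] (hEinj : Module.Injective R E)
    (i : R →ₗ[R] E) (hi : Function.Injective i)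
    (hess : IsEssentialIn R (LinearMap.range i) (⊤ : Submodule R E))
    (hhom : ∀ f : N →ₗ[R] E, f = 0) :
    Module.Injective R N :=
  stmt_9_general R hsum N hN E hEinj i hi hhom
end

section
/- Let R be a commutative local artinian ring such that every uniform R-module is either simple or injective of composition length 2. Then the socle of R is simple, and R is a principal ideal ring whose composition length as a module over itself is at most 2. -/
universe u v

open CategoryTheory

/-!
If the maximal ideal `𝔪` is nonzero, pick `0 ≠ c ∈ 𝔪` and an ideal `I` maximal with `c ∉ I`.
Every nonzero submodule of `R ⧸ I` contains the class of `c`, so `R ⧸ I` is uniform; it is not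
simple since `c ∈ 𝔪 \ I`, so it is injective of length `2`. A simple ideal inside
`I = Ann (R ⧸ I)` would embed into the injective module `R ⧸ I`, but every extension of a map
`R → R ⧸ I` is multiplication by an element and so kills `I`. Hence `I = 0`, `R` has length `2`
and `𝔪` is simple, so the ideals of `R` are exactly `0 ≤ 𝔪 ≤ R`.
-/

open IsLocalRing

theorem Module.Baer.eq_zero_of_le_annihilator {R : Type u} [CommRing R] {Q : Type v}
    [AddCommGroup Q] [Module R Q] (hQ : Module.Baer R Q) {J : Ideal R}
    (hJ : J ≤ Module.annihilator R Q) (f : J →ₗ[R] Q) : f = 0 := by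
  obtain ⟨g, hg⟩ := hQ J f
  ext ⟨x, hx⟩
  rw [← hg x hx, LinearMap.zero_apply]
  calc g x = x • g 1 := by rw [← map_smul, smul_eq_mul, mul_one]
    _ = 0 := Module.mem_annihilator.1 (hJ hx) _

theorem IsLocalRing.nonempty_linearEquiv_quotient_maximalIdeal {R : Type u} [CommRing R]
    [IsLocalRing R] (M : Type v) [AddCommGroup M] [Module R M] [IsSimpleModule R M] :
    Nonempty (M ≃ₗ[R] R ⧸ maximalIdeal R) := by
  obtain ⟨I, hI, ⟨e⟩⟩ := isSimpleModule_iff_quot_maximal.1 ‹IsSimpleModule R M›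
  exact ⟨eq_maximalIdeal hI ▸ e⟩

theorem Module.Injective.annihilator_eq_bot {R : Type u} [CommRing R] [IsLocalRing R]
    [IsArtinianRing R] {Q : Type v} [AddCommGroup Q] [Module R Q] [Small.{v} R]
    [Module.Injective R Q]
    (N : Submodule R Q) [IsSimpleModule R N] : Module.annihilator R Q = ⊥ := by
  by_contra hne
  obtain ⟨J, hJ, hJQ⟩ := (eq_bot_or_exists_atom_le _).resolve_left hne
  have : IsSimpleModule R J := isSimpleModule_iff_isAtom.2 hJ
  obtain ⟨eJ⟩ := nonempty_linearEquiv_quotient_maximalIdeal (R := R) J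
  obtain ⟨eN⟩ := nonempty_linearEquiv_quotient_maximalIdeal (R := R) N
  have hzero := (Module.Baer.of_injective ‹_›).eq_zero_of_le_annihilator hJQ
    (N.subtype ∘ₗ (eJ.trans eN.symm).toLinearMap)
  obtain ⟨x, hxJ, hx0⟩ := Submodule.exists_mem_ne_zero_of_ne_bot hJ.1
  exact hx0 (by simpa using LinearMap.congr_fun hzero ⟨x, hxJ⟩)

theorem Submodule.exists_maximal_notMem {R : Type u} [Ring R] {M : Type v} [AddCommGroup M]
    [Module R M] {c : M} (hc : c ≠ 0) : ∃ N : Submodule R M, Maximal (c ∉ ·) N := by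
  have chain_bdd : ∀ C ⊆ {N : Submodule R M | c ∉ N}, IsChain (· ≤ ·) C → ∀ N₀ ∈ C,
      ∃ B ∈ {N : Submodule R M | c ∉ N}, ∀ N ∈ C, N ≤ B := by
    refine fun C hC hchain N₀ hN₀ => ⟨sSup C, fun hcC => ?_, fun _ => le_sSup⟩
    obtain ⟨N, hNC, hcN⟩ := (Submodule.mem_sSup_of_directed ⟨N₀, hN₀⟩ hchain.directedOn).1 hcC
    exact hC hNC hcN
  obtain ⟨N, -, hN⟩ := zorn_le_nonempty₀ _ chain_bdd ⊥ (by simpa using hc)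
  exact ⟨N, hN⟩

theorem isUniformModule_quotient_of_maximal_notMem {R : Type u} [Ring R] {M : Type v}
    [AddCommGroup M] [Module R M] {N : Submodule R M} {c : M} (hN : Maximal (c ∉ ·) N) :
    IsUniformModule R (M ⧸ N) := by
  have mk_mem (P : Submodule R (M ⧸ N)) (hP : P ≠ ⊥) : N.mkQ c ∈ P := by
    by_contra hc
    refine hP (eq_bot_iff.2 fun x hx => ?_)
    obtain ⟨y, rfl⟩ := N.mkQ_surjective x
    have hyN : y ∈ N := hN.2 (show c ∉ P.comap N.mkQ from hc) (N.le_comap_mkQ P) hx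
    simpa using hyN
  have hc : N.mkQ c ≠ 0 := by simpa using hN.1
  refine ⟨⟨⟨_, _, hc⟩⟩, fun P hP => ⟨le_top, fun K _ hK hPK => hc ?_⟩⟩
  simpa [hPK] using Submodule.mem_inf.2 ⟨mk_mem P hP, mk_mem K hK⟩

theorem HasCompositionLength2.of_linearEquiv {R : Type u} [Ring R] {M N : Type v}
    [AddCommGroup M] [Module R M] [AddCommGroup N] [Module R N] (e : M ≃ₗ[R] N)
    (hM : HasCompositionLength2 R M) : HasCompositionLength2 R N := by
  obtain ⟨P, hP, hQ⟩ := hM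
  exact ⟨P.map (e : M →ₗ[R] N),
    IsSimpleModule.congr (Submodule.equivMapOfInjective _ e.injective P).symm,
    IsSimpleModule.congr (Submodule.Quotient.equiv P _ e rfl).symm⟩

theorem IsLocalRing.isAtom_maximalIdeal_of_hasCompositionLength2 {R : Type u} [CommRing R]
    [IsLocalRing R] (hR : HasCompositionLength2 R R) : IsAtom (maximalIdeal R) := by
  obtain ⟨N, hN, hQ⟩ := hR
  rw [← eq_maximalIdeal (Ideal.isMaximal_def.2 (isSimpleModule_iff_isCoatom.1 hQ))]
  exact isSimpleModule_iff_isAtom.1 hN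

theorem IsLocalRing.maximalIdeal_eq_bot_or_isAtom_of_uniform {R : Type u} [CommRing R]
    [IsLocalRing R] [IsArtinianRing R]
    (h : ∀ (U : Type u) [AddCommGroup U] [Module R U], IsUniformModule R U →
      IsSimpleModule R U ∨ (Module.Injective R U ∧ HasCompositionLength2 R U)) :
    maximalIdeal R = ⊥ ∨ IsAtom (maximalIdeal R) := by
  refine or_iff_not_imp_left.2 fun hm => ?_
  obtain ⟨c, hcm, hc0⟩ := Submodule.exists_mem_ne_zero_of_ne_bot hm
  obtain ⟨I, hI⟩ := Submodule.exists_maximal_notMem (R := R) hc0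
  rcases h (R ⧸ I) (isUniformModule_quotient_of_maximal_notMem hI) with hsimple | ⟨hinj, hlen⟩
  · have : I = maximalIdeal R :=
      eq_maximalIdeal (Ideal.isMaximal_def.2 (isSimpleModule_iff_isCoatom.1 hsimple))
    exact absurd (this ▸ hcm) hI.1
  · have ⟨N, hN, _⟩ := hlen
    have hI0 : I = ⊥ := by
      simpa [Ideal.annihilator_quotient] using Module.Injective.annihilator_eq_bot N
    subst hI0
    exact isAtom_maximalIdeal_of_hasCompositionLength2
      (HasCompositionLength2.of_linearEquiv (Submodule.quotEquivOfEqBot ⊥ rfl) hlen)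

theorem IsLocalRing.eq_bot_or_eq_maximalIdeal_or_eq_top {R : Type u} [CommRing R]
    [IsLocalRing R] (hm : maximalIdeal R = ⊥ ∨ IsAtom (maximalIdeal R)) (J : Ideal R) :
    J = ⊥ ∨ J = maximalIdeal R ∨ J = ⊤ := by
  rcases eq_or_ne J ⊤ with hJ | hJ
  · exact Or.inr (Or.inr hJ)
  have hle := le_maximalIdeal hJ
  rcases hm with hm | hm
  · exact Or.inl (le_bot_iff.1 (hm ▸ hle))
  · exact (hm.le_iff.1 hle).imp_right Or.inl

theorem Submodule.isPrincipal_of_isAtom {R : Type u} [Ring R] {M : Type v} [AddCommGroup M]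
    [Module R M] {N : Submodule R M} (hN : IsAtom N) : N.IsPrincipal := by
  obtain ⟨x, hx, hx0⟩ := Submodule.exists_mem_ne_zero_of_ne_bot hN.1
  have hspan : span R {x} ≠ ⊥ := by simpa using hx0
  exact ⟨x, ((hN.le_iff_eq hspan).1 ((span_singleton_le_iff_mem x N).2 hx)).symm⟩

theorem IsLocalRing.isPrincipalIdealRing_of_maximalIdeal_eq_bot_or_isAtom {R : Type u}
    [CommRing R] [IsLocalRing R] (hm : maximalIdeal R = ⊥ ∨ IsAtom (maximalIdeal R)) :
    IsPrincipalIdealRing R := by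
  refine ⟨fun J => ?_⟩
  rcases eq_bot_or_eq_maximalIdeal_or_eq_top hm J with rfl | rfl | rfl
  · exact bot_isPrincipal
  · exact hm.elim (· ▸ bot_isPrincipal) Submodule.isPrincipal_of_isAtom
  · exact top_isPrincipal

theorem isSimpleModule_sSup_simples_of_le_total {R : Type u} [Ring R] {M : Type v}
    [AddCommGroup M] [Module R M] [Nontrivial M] [IsAtomic (Submodule R M)]
    (h : ∀ A B : Submodule R M, A ≤ B ∨ B ≤ A) :
    IsSimpleModule R ↥(sSup {S : Submodule R M | IsSimpleModule R ↥S}) := by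
  obtain ⟨S, hS⟩ := IsAtomic.exists_atom (Submodule R M)
  have hsimples : {S : Submodule R M | IsSimpleModule R ↥S} = {S} := by
    refine Set.eq_singleton_iff_unique_mem.2 ⟨isSimpleModule_iff_isAtom.2 hS, fun T hT => ?_⟩
    replace hT : IsAtom T := isSimpleModule_iff_isAtom.1 hT
    rcases h T S with hle | hle
    · exact (hS.le_iff_eq hT.1).1 hle
    · exact ((hT.le_iff_eq hS.1).1 hle).symm
  rw [hsimples, sSup_singleton]
  exact isSimpleModule_iff_isAtom.2 hS

theorem stmt_16 (R : Type u) [CommRing R] [IsLocalRing R] [IsArtinianRing R]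
    (h : ∀ (U : Type u) [AddCommGroup U] [Module R U], IsUniformModule R U →
      IsSimpleModule R U ∨ (Module.Injective R U ∧ HasCompositionLength2 R U)) :
    IsSimpleModule R ↥(sSup {S : Submodule R R | IsSimpleModule R ↥S}) ∧
      IsPrincipalIdealRing R ∧ CompositionLengthLE2 R R := by
  have hm := maximalIdeal_eq_bot_or_isAtom_of_uniform h
  have hideals := eq_bot_or_eq_maximalIdeal_or_eq_top hm
  refine ⟨isSimpleModule_sSup_simples_of_le_total fun J K => ?_,
    isPrincipalIdealRing_of_maximalIdeal_eq_bot_or_isAtom hm,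
    maximalIdeal R, hm.symm.imp isSimpleModule_iff_isAtom.2 id,
    Or.inl (isSimpleModule_iff_isCoatom.2 (maximalIdeal.isMaximal R).out)⟩
  rcases hideals J with rfl | rfl | rfl <;> rcases hideals K with rfl | rfl | rfl <;> simp
end
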